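/- arXiv:math/9810072 — 2 statements merged into one kernel-verified Lean document; each statement's English description precedes it below -/
import Mathlib

section
/- For any topological space (X, 𝒯), the family of semi-open sets of (X, 𝒯^α) coincides with the family of semi-open sets of (X, 𝒯), i.e. SO(X, 𝒯^α) = SO(X, 𝒯). -/
open Set TopologicalSpace

universe u v

variable {X : Type u} {Y : Type v}

/-- A set is an α-set (α-open) w.r.t. the topology `T` if `A ⊆ Int (Cl (Int A))`. -/
def AlphaOpen (T : TopologicalSpace X) (A : Set X) : Prop :=
  letI := T
  A ⊆ interior (closure (interior A))

/-- The α-topology `𝒯^α`, whose open sets are exactly the α-sets of `T`. -/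
def alphaTop (T : TopologicalSpace X) : TopologicalSpace X :=
  letI := T
  { IsOpen := fun A => A ⊆ interior (closure (interior A))
    isOpen_univ := by simp
    isOpen_inter := by
      intro A B hA hB
      have hsub : interior (closure (interior A)) ∩ interior (closure (interior B)) ⊆
          closure (interior (A ∩ B)) := by
        intro x hx
        have h1 : interior (closure (interior B)) ∩ closure (interior A) ⊆
            closure (interior (closure (interior B)) ∩ interior A) :=
          isOpen_interior.inter_closure
        have h2 : interior (closure (interior B)) ∩ interior A ⊆
            closure (interior A ∩ interior B) := by
          intro y hy
          have h : interior A ∩ closure (interior B) ⊆ closure (interior A ∩ interior B) :=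
            isOpen_interior.inter_closure
          exact h ⟨hy.2, interior_subset hy.1⟩
        have h3 : closure (interior (closure (interior B)) ∩ interior A) ⊆
            closure (interior A ∩ interior B) := by
          calc closure (interior (closure (interior B)) ∩ interior A)
              ⊆ closure (closure (interior A ∩ interior B)) := closure_mono h2
            _ = closure (interior A ∩ interior B) := closure_closure
        have hx' : x ∈ closure (interior A ∩ interior B) :=
          h3 (h1 ⟨hx.2, interior_subset hx.1⟩)
        rwa [← interior_inter] at hx'
      intro x hx
      exact interior_maximal hsub (isOpen_interior.inter isOpen_interior) ⟨hA hx.1, hB hx.2⟩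
    isOpen_sUnion := by
      intro S hS x hx
      obtain ⟨t, htS, hxt⟩ := hx
      have h : interior (closure (interior t)) ⊆ interior (closure (interior (⋃₀ S))) :=
        interior_mono (closure_mono (interior_mono (subset_sUnion_of_mem htS)))
      exact h (hS t htS hxt) }

/-- `A` is semi-open w.r.t. `T` if `A ⊆ Cl (Int A)`. -/
def SemiOpen (T : TopologicalSpace X) (A : Set X) : Prop :=
  letI := T
  A ⊆ closure (interior A)

/-- `A` is semi-closed if its complement is semi-open. -/
def SemiClosed (T : TopologicalSpace X) (A : Set X) : Prop :=
  SemiOpen T Aᶜ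

/-- The semi-closure of `A`: the intersection of all semi-closed sets containing `A`. -/
def sCl (T : TopologicalSpace X) (A : Set X) : Set X :=
  ⋂₀ {C | SemiClosed T C ∧ A ⊆ C}

/-- `A` is sg-closed if `sCl A ⊆ U` whenever `A ⊆ U` with `U` semi-open. -/
def SgClosed (T : TopologicalSpace X) (A : Set X) : Prop :=
  ∀ U : Set X, SemiOpen T U → A ⊆ U → sCl T A ⊆ U

/-- `A` is sg-open if its complement is sg-closed. -/
def SgOpen (T : TopologicalSpace X) (A : Set X) : Prop :=
  SgClosed T Aᶜ

/-- `A` is regular closed w.r.t. `T` if `A = Cl (Int A)`. -/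
def RegClosed (T : TopologicalSpace X) (A : Set X) : Prop :=
  letI := T
  A = closure (interior A)

/-- A family `𝒱` refines a family `𝒰` if every member of `𝒱` is contained in a member of `𝒰`. -/
def Refines (𝒱 𝒰 : Set (Set X)) : Prop :=
  ∀ V ∈ 𝒱, ∃ U ∈ 𝒰, V ⊆ U

/-- A family of sets is locally finite if every point has a neighbourhood
meeting only finitely many members. -/
def LocFinite (T : TopologicalSpace X) (𝒱 : Set (Set X)) : Prop :=
  ∀ x : X, ∃ N ∈ @nhds X T x, {V ∈ 𝒱 | (V ∩ N).Nonempty}.Finite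

/-- A family of sets is locally countable if every point has a neighbourhood
meeting only countably many members. -/
def LocCountable (T : TopologicalSpace X) (𝒱 : Set (Set X)) : Prop :=
  ∀ x : X, ∃ N ∈ @nhds X T x, {V ∈ 𝒱 | (V ∩ N).Nonempty}.Countable

/-- A family of sets is discrete if every point has a neighbourhood
meeting at most one member. -/
def DiscreteFam (T : TopologicalSpace X) (𝒱 : Set (Set X)) : Prop :=
  ∀ x : X, ∃ N ∈ @nhds X T x, {V ∈ 𝒱 | (V ∩ N).Nonempty}.Subsingleton

/-- A family is σ-discrete if it is a countable union of discrete families. -/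
def SigmaDiscrete (T : TopologicalSpace X) (𝒱 : Set (Set X)) : Prop :=
  ∃ 𝒲 : ℕ → Set (Set X), 𝒱 = ⋃ n, 𝒲 n ∧ ∀ n, DiscreteFam T (𝒲 n)

/-- A family is closure-preserving if for every subfamily the closure of the
union is the union of the closures. -/
def ClosurePreserving (T : TopologicalSpace X) (𝒲 : Set (Set X)) : Prop :=
  letI := T
  ∀ 𝒲' ⊆ 𝒲, closure (⋃₀ 𝒲') = ⋃ W ∈ 𝒲', closure W

/-- A family is σ-closure-preserving if it is a countable union of
closure-preserving families. -/
def SigmaClosurePreserving (T : TopologicalSpace X) (𝒱 : Set (Set X)) : Prop :=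
  ∃ 𝒲 : ℕ → Set (Set X), 𝒱 = ⋃ n, 𝒲 n ∧ ∀ n, ClosurePreserving T (𝒲 n)

/-- Semi-compact: every semi-open cover has a finite subcover. -/
def SemiCompact (T : TopologicalSpace X) : Prop :=
  ∀ 𝒰 : Set (Set X), (∀ U ∈ 𝒰, SemiOpen T U) → ⋃₀ 𝒰 = univ →
    ∃ 𝒱 ⊆ 𝒰, 𝒱.Finite ∧ ⋃₀ 𝒱 = univ

/-- S-closed: for every semi-open cover there is a finite subfamily
whose closures cover. -/
def SClosed (T : TopologicalSpace X) : Prop :=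
  letI := T
  ∀ 𝒰 : Set (Set X), (∀ U ∈ 𝒰, SemiOpen T U) → ⋃₀ 𝒰 = univ →
    ∃ 𝒱 ⊆ 𝒰, 𝒱.Finite ∧ (⋃ V ∈ 𝒱, closure V) = univ

/-- s-closed: for every semi-open cover there is a finite subfamily
whose semi-closures cover. -/
def SmallSClosed (T : TopologicalSpace X) : Prop :=
  ∀ 𝒰 : Set (Set X), (∀ U ∈ 𝒰, SemiOpen T U) → ⋃₀ 𝒰 = univ →
    ∃ 𝒱 ⊆ 𝒰, 𝒱.Finite ∧ (⋃ V ∈ 𝒱, sCl T V) = univ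

/-- rc-Lindelöf: every regular closed cover has a countable subcover. -/
def RcLindelof (T : TopologicalSpace X) : Prop :=
  ∀ 𝒰 : Set (Set X), (∀ U ∈ 𝒰, RegClosed T U) → ⋃₀ 𝒰 = univ →
    ∃ 𝒱 ⊆ 𝒰, 𝒱.Countable ∧ ⋃₀ 𝒱 = univ

/-- sg-compact: every sg-open cover has a finite subcover. -/
def SgCompact (T : TopologicalSpace X) : Prop :=
  ∀ 𝒰 : Set (Set X), (∀ U ∈ 𝒰, SgOpen T U) → ⋃₀ 𝒰 = univ →
    ∃ 𝒱 ⊆ 𝒰, 𝒱.Finite ∧ ⋃₀ 𝒱 = univ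

/-- `A` is S-closed relative to `X`: every cover of `A` by semi-open sets of `X`
has a finite subfamily whose closures cover `A`. -/
def SClosedRel (T : TopologicalSpace X) (A : Set X) : Prop :=
  letI := T
  ∀ 𝒰 : Set (Set X), (∀ U ∈ 𝒰, SemiOpen T U) → A ⊆ ⋃₀ 𝒰 →
    ∃ 𝒱 ⊆ 𝒰, 𝒱.Finite ∧ A ⊆ ⋃ V ∈ 𝒱, closure V

/-- `A` is s-closed relative to `X`: every cover of `A` by semi-open sets of `X`
has a finite subfamily whose semi-closures cover `A`. -/
def SmallSClosedRel (T : TopologicalSpace X) (A : Set X) : Prop :=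
  ∀ 𝒰 : Set (Set X), (∀ U ∈ 𝒰, SemiOpen T U) → A ⊆ ⋃₀ 𝒰 →
    ∃ 𝒱 ⊆ 𝒰, 𝒱.Finite ∧ A ⊆ ⋃ V ∈ 𝒱, sCl T V

/-- Locally S-closed: every point has a neighbourhood which is S-closed relative to `X`. -/
def LocallySClosed (T : TopologicalSpace X) : Prop :=
  ∀ x : X, ∃ N ∈ @nhds X T x, SClosedRel T N

/-- Locally s-closed: every point has a neighbourhood which is s-closed relative to `X`. -/
def LocallySmallSClosed (T : TopologicalSpace X) : Prop :=
  ∀ x : X, ∃ N ∈ @nhds X T x, SmallSClosedRel T N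

/-- para-S-closed: every semi-open cover has a locally finite refinement by
semi-open sets whose union is dense. -/
def ParaSClosed (T : TopologicalSpace X) : Prop :=
  letI := T
  ∀ 𝒰 : Set (Set X), (∀ U ∈ 𝒰, SemiOpen T U) → ⋃₀ 𝒰 = univ →
    ∃ 𝒱 : Set (Set X), (∀ V ∈ 𝒱, SemiOpen T V) ∧ LocFinite T 𝒱 ∧ Refines 𝒱 𝒰 ∧
      closure (⋃₀ 𝒱) = univ

/-- para-rc-Lindelöf: every regular closed cover has a locally countable
refinement by regular closed sets. -/
def ParaRcLindelof (T : TopologicalSpace X) : Prop :=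
  ∀ 𝒰 : Set (Set X), (∀ U ∈ 𝒰, RegClosed T U) → ⋃₀ 𝒰 = univ →
    ∃ 𝒱 : Set (Set X), (∀ V ∈ 𝒱, RegClosed T V) ∧ LocCountable T 𝒱 ∧ Refines 𝒱 𝒰 ∧
      ⋃₀ 𝒱 = univ

/-- α-subparacompact: every α-open cover has a σ-discrete closed refinement covering `X`. -/
def AlphaSubparacompact (T : TopologicalSpace X) : Prop :=
  ∀ 𝒰 : Set (Set X), (∀ U ∈ 𝒰, AlphaOpen T U) → ⋃₀ 𝒰 = univ →
    ∃ 𝒱 : Set (Set X), (∀ V ∈ 𝒱, @IsClosed X T V) ∧ SigmaDiscrete T 𝒱 ∧ Refines 𝒱 𝒰 ∧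
      ⋃₀ 𝒱 = univ

/-- gα-closed: `Cl_α A ⊆ U` whenever `A ⊆ U` with `U` α-open. -/
def GAlphaClosed (T : TopologicalSpace X) (A : Set X) : Prop :=
  ∀ U : Set X, AlphaOpen T U → A ⊆ U → @closure X (alphaTop T) A ⊆ U

/-- α-paracompact: every α-open cover has a locally finite open refinement. -/
def AlphaParacompact (T : TopologicalSpace X) : Prop :=
  ∀ 𝒰 : Set (Set X), (∀ U ∈ 𝒰, AlphaOpen T U) → ⋃₀ 𝒰 = univ →
    ∃ 𝒱 : Set (Set X), (∀ V ∈ 𝒱, T.IsOpen V) ∧ LocFinite T 𝒱 ∧ Refines 𝒱 𝒰 ∧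
      ⋃₀ 𝒱 = univ

open Topology

/-!
Every topology `𝒯'` between `𝒯` and `𝒯^α` has the same semi-open sets as `𝒯`. A `𝒯'`-open
set `V` is an α-set, so `V ⊆ Int Cl Int V`; a `𝒯`-open set missing `V` then misses
`Int Cl Int V` as well, so closures of `𝒯`-open sets are the same in `𝒯` and `𝒯'`. Likewise
`Int_{𝒯'} A ⊆ Int Cl Int A`, whose closure is `Cl Int A`.
-/

section

-- `t` is declared last so that it is the local instance behind unannotated `closure`, `interior`.
variable {t' : TopologicalSpace X} [t : TopologicalSpace X]

theorem alphaTop_le : alphaTop t ≤ t := by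
  intro A hA
  change A ⊆ interior (closure (interior A))
  rw [hA.interior_eq]
  exact interior_maximal subset_closure hA

theorem IsOpen.disjoint_interior_closure_interior {U V : Set X} (hU : IsOpen U)
    (hUV : Disjoint U V) : Disjoint U (interior (closure (interior V))) :=
  ((hUV.mono_right interior_subset).closure_right hU).mono_right interior_subset

theorem closure_subset_closure_of_alphaTop_le (h : alphaTop t ≤ t') {U : Set X}
    (hU : IsOpen U) : closure U ⊆ closure[t'] U := by
  intro x hx
  rw [@mem_closure_iff X t']
  intro V hV hxV
  rw [← not_disjoint_iff_nonempty_inter]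
  intro hVU
  have hxU : (interior (closure (interior V)) ∩ U).Nonempty :=
    mem_closure_iff.mp hx _ isOpen_interior (h V hV hxV)
  exact not_disjoint_iff_nonempty_inter.mpr hxU
    (hU.disjoint_interior_closure_interior hVU.symm).symm

theorem closure_interior_subset_of_alphaTop_le (h : alphaTop t ≤ t') (A : Set X) :
    closure (@interior X t' A) ⊆ closure (interior A) := by
  refine closure_minimal ?_ isClosed_closure
  calc @interior X t' A
      ⊆ interior (closure (interior (@interior X t' A))) := h _ (@isOpen_interior X t' A)
    _ ⊆ interior (closure (interior A)) :=
      interior_mono (closure_mono (interior_mono (@interior_subset X t' A)))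
    _ ⊆ closure (interior A) := interior_subset

theorem semiOpen_iff_of_alphaTop_le_of_le (h₁ : alphaTop t ≤ t') (h₂ : t' ≤ t) {A : Set X} :
    SemiOpen t' A ↔ SemiOpen t A := by
  constructor
  · intro hA
    calc A ⊆ closure[t'] (@interior X t' A) := hA
      _ ⊆ closure (@interior X t' A) := closure.mono h₂
      _ ⊆ closure (interior A) := closure_interior_subset_of_alphaTop_le h₁ A
  · intro hA
    have hint : interior A ⊆ @interior X t' A :=
      @interior_maximal X t' _ _ interior_subset (h₂ _ isOpen_interior)
    calc A ⊆ closure (interior A) := hA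
      _ ⊆ closure[t'] (interior A) := closure_subset_closure_of_alphaTop_le h₁ isOpen_interior
      _ ⊆ closure[t'] (@interior X t' A) := @closure_mono X t' _ _ hint

end

/-- `SO(X, 𝒯^α) = SO(X, 𝒯)`. -/
theorem semiOpen_alphaTop_eq (T : TopologicalSpace X) :
    {A : Set X | SemiOpen (alphaTop T) A} = {A : Set X | SemiOpen T A} := by
  ext A
  exact semiOpen_iff_of_alphaTop_le_of_le le_rfl (alphaTop_le (t := T))
end

section
/- Every extremally disconnected, rc-Lindelöf topological space is para-S-closed. -/
open Set TopologicalSpace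

universe u v

variable {X : Type u} {Y : Type v}

/-- every extremally disconnected rc-Lindelöf space is para-S-closed. -/
theorem paraSClosed_of_extremallyDisconnected_rcLindelof (T : TopologicalSpace X)
    (hED : ∀ U : Set X, T.IsOpen U → T.IsOpen (@closure X T U))
    (hL : RcLindelof T) : ParaSClosed T := by
  letI := T
  intro 𝒰 hU hcov
  -- The regular closed cover by closures of interiors
  set 𝒞 : Set (Set X) := (fun U => closure (interior U)) '' 𝒰 with h𝒞
  have hreg : ∀ C ∈ 𝒞, RegClosed T C := by
    rintro C ⟨U, _, rfl⟩
    show closure (interior U) = closure (interior (closure (interior U)))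
    refine subset_antisymm (closure_mono (interior_maximal subset_closure isOpen_interior)) ?_
    calc closure (interior (closure (interior U)))
        ⊆ closure (closure (interior U)) := closure_mono interior_subset
      _ = closure (interior U) := closure_closure
  have hCcov : ⋃₀ 𝒞 = univ := by
    apply eq_univ_of_univ_subset
    rw [← hcov]
    rintro x ⟨U, hUm, hxU⟩
    exact ⟨closure (interior U), ⟨U, hUm, rfl⟩, hU U hUm hxU⟩
  obtain ⟨𝒱', h𝒱'sub, h𝒱'cnt, h𝒱'cov⟩ := hL 𝒞 hreg hCcov
  rcases 𝒱'.eq_empty_or_nonempty with he | hne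
  · -- then X is empty
    have huniv : (univ : Set X) = ∅ := by rw [← h𝒱'cov, he, sUnion_empty]
    refine ⟨∅, by simp, ?_, by simp [Refines], by simp [huniv]⟩
    intro x
    exact absurd (mem_univ x) (by simp [huniv])
  obtain ⟨f, rfl⟩ := h𝒱'cnt.exists_eq_range hne
  have hmem : ∀ n, ∃ U ∈ 𝒰, f n = closure (interior U) := by
    intro n
    obtain ⟨U, hUm, hUe⟩ := h𝒱'sub (mem_range_self n)
    exact ⟨U, hUm, hUe.symm⟩
  choose g hg1 hg2 using hmem
  have hfopen : ∀ n, IsOpen (f n) := fun n => by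
    rw [hg2]; exact hED _ isOpen_interior
  have hfclosed : ∀ n, IsClosed (f n) := fun n => by
    rw [hg2]; exact isClosed_closure
  -- disjointify
  set V : ℕ → Set X := fun n => f n \ ⋃ m ∈ Finset.range n, f m with hV
  have hVopen : ∀ n, IsOpen (V n) := fun n =>
    (hfopen n).sdiff (isClosed_biUnion_finset fun m _ => hfclosed m)
  have hVsub : ∀ n, V n ⊆ f n := fun n => diff_subset
  have hVdisj : ∀ m n, m ≠ n → V m ∩ V n = ∅ := by
    have key : ∀ m n, m < n → V m ∩ V n = ∅ := by
      intro m n hmn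
      apply eq_empty_of_forall_notMem
      rintro x ⟨hxm, hxn⟩
      exact hxn.2 (mem_biUnion (Finset.mem_range.mpr hmn) (hVsub m hxm))
    intro m n hmn
    rcases lt_or_gt_of_ne hmn with h | h
    · exact key m n h
    · rw [inter_comm]; exact key n m h
  -- every point is in some V n
  have hfmem : ∀ x : X, ∃ n, x ∈ f n := by
    intro x
    have : x ∈ ⋃₀ range f := h𝒱'cov ▸ mem_univ x
    obtain ⟨A, ⟨n, rfl⟩, hx⟩ := this
    exact ⟨n, hx⟩
  have hVmem : ∀ x : X, ∃ n, x ∈ V n := by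
    intro x
    classical
    have hex : ∃ n, x ∈ f n := hfmem x
    refine ⟨Nat.find hex, Nat.find_spec hex, ?_⟩
    simp only [mem_iUnion, Finset.mem_range, not_exists]
    intro m hm
    exact fun hxm => Nat.find_min hex hm hxm
  -- the refinement
  set W : ℕ → Set X := fun n => V n ∩ g n with hW
  have hWVclos : ∀ n, V n ⊆ closure (W n) := by
    intro n
    have h1 : V n ⊆ V n ∩ closure (interior (g n)) := by
      intro x hx
      exact ⟨hx, (hg2 n) ▸ hVsub n hx⟩
    refine h1.trans (((hVopen n).inter_closure).trans (closure_mono ?_))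
    exact inter_subset_inter_right _ interior_subset
  refine ⟨range W, ?_, ?_, ?_, ?_⟩
  · -- semi-open
    rintro A ⟨n, rfl⟩
    show W n ⊆ closure (interior (W n))
    have h1 : W n ⊆ V n ∩ closure (interior (g n)) := by
      intro x hx
      exact ⟨hx.1, hU (g n) (hg1 n) hx.2⟩
    refine h1.trans (((hVopen n).inter_closure).trans (closure_mono ?_))
    exact interior_maximal (inter_subset_inter_right _ interior_subset)
      ((hVopen n).inter isOpen_interior)
  · -- locally finite
    intro x
    obtain ⟨n, hn⟩ := hVmem x
    refine ⟨V n, (hVopen n).mem_nhds hn, ?_⟩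
    refine (Set.finite_singleton (W n)).subset ?_
    rintro A ⟨⟨m, rfl⟩, ⟨y, hyW, hyV⟩⟩
    rcases eq_or_ne m n with rfl | hmn
    · rfl
    · exact absurd (hVdisj m n hmn ▸ mem_inter hyW.1 hyV : y ∈ (∅ : Set X)) (notMem_empty y)
  · -- refines
    rintro A ⟨n, rfl⟩
    exact ⟨g n, hg1 n, inter_subset_right⟩
  · -- dense union
    apply eq_univ_of_univ_subset
    intro x _
    obtain ⟨n, hn⟩ := hVmem x
    exact closure_mono (subset_sUnion_of_mem (mem_range_self n)) (hWVclos n hn)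
end
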